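/- arXiv:math/9909075 — 5 statements merged into one kernel-verified Lean document; each statement's English description precedes it below -/
import Mathlib

section
/- Let $f_1,\ldots,f_n:(a,b)\to(0,\infty)$ be continuous positive functions and fix $i\in\{1,\ldots,n\}$ and $c\in(a,b)$. If $\int_c^b f_i^{-2}\left(\sum_{j=1}^n f_j^{-2}+1\right)^{-1/2}=\infty$, then for all constants $c_1,\ldots,c_n\geq 0$ with $c_1+\cdots+c_n=1$ and all $D\in\mathbb{R}$ such that $\sum_{j=1}^n c_j f_j(\tau)^{-2}-D>0$ for all $\tau\in(c,b)$, one has $\int_c^b f_i^{-2}\left(\sum_{j=1}^n c_j f_j^{-2}-D\right)^{-1/2}=\infty$. -/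
/-!
Since the weights lie in `[0, 1]` and the `f_j⁻²` are nonnegative,
`∑ c_j f_j⁻² - D ≤ (1 + |D|) (∑ f_j⁻² + 1)`. Hence the integrand with parameter `1` is at most
`√(1 + |D|)` times the one with `c, D`, and divergence transfers.
-/

open MeasureTheory Set

theorem setLIntegral_eq_top_of_le_const_mul {α : Type*} [MeasurableSpace α] {μ : Measure α}
    {s : Set α} (hs : MeasurableSet s) {g h : α → ENNReal} {C : ENNReal} (hC : C ≠ ⊤)
    (hgh : ∀ x ∈ s, g x ≤ C * h x) (hg : ∫⁻ x in s, g x ∂μ = ⊤) :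
    ∫⁻ x in s, h x ∂μ = ⊤ := by
  have hle : ∫⁻ x in s, g x ∂μ ≤ C * ∫⁻ x in s, h x ∂μ := by
    rw [← lintegral_const_mul' C h hC]
    exact setLIntegral_mono' hs hgh
  rw [hg, top_le_iff] at hle
  exact (ENNReal.mul_eq_top.mp hle).elim And.right fun hC_top ↦ absurd hC_top.1 hC

theorem inv_sqrt_le_sqrt_mul_inv_sqrt {u v C : ℝ} (hu : 0 < u) (hC : 0 ≤ C) (huv : u ≤ C * v) :
    (√v)⁻¹ ≤ √C * (√u)⁻¹ := by
  have hv : 0 < v := pos_of_mul_pos_right (hu.trans_le huv) hC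
  rw [← Real.sqrt_inv, ← Real.sqrt_inv, ← Real.sqrt_mul' C (inv_nonneg.2 hu.le)]
  apply Real.sqrt_le_sqrt
  rw [← div_eq_mul_inv, le_div_iff₀ hu, ← div_eq_inv_mul, div_le_iff₀ hv]
  exact huv

theorem sum_mul_sub_le_mul_sum_add_one {ι : Type*} (s : Finset ι) {w x : ι → ℝ}
    (hw : ∀ j ∈ s, w j ≤ 1) (hx : ∀ j ∈ s, 0 ≤ x j) (D : ℝ) :
    ∑ j ∈ s, w j * x j - D ≤ (1 + |D|) * (∑ j ∈ s, x j + 1) := by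
  have hwx : ∑ j ∈ s, w j * x j ≤ ∑ j ∈ s, x j :=
    Finset.sum_le_sum fun j hj ↦ mul_le_of_le_one_left (hx j hj) (hw j hj)
  have hS : 0 ≤ ∑ j ∈ s, x j := Finset.sum_nonneg hx
  nlinarith [neg_le_abs D, abs_nonneg D]

theorem stmt_3_general (n : ℕ) (b : ℝ) (f : Fin n → ℝ → ℝ)
    (i : Fin n) (c : ℝ)
    (hdiv : ∫⁻ τ in Ioo c b,
      ENNReal.ofReal ((f i τ ^ 2)⁻¹ *
        (Real.sqrt ((∑ j, (f j τ ^ 2)⁻¹) + 1))⁻¹) = ⊤) :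
    ∀ cs : Fin n → ℝ, (∀ j, 0 ≤ cs j) → (∑ j, cs j = 1) →
      ∀ D : ℝ, (∀ τ ∈ Ioo c b, D < ∑ j, cs j * (f j τ ^ 2)⁻¹) →
      ∫⁻ τ in Ioo c b,
        ENNReal.ofReal ((f i τ ^ 2)⁻¹ *
          (Real.sqrt ((∑ j, cs j * (f j τ ^ 2)⁻¹) - D))⁻¹) = ⊤ := by
  intro cs hcs hsum D hD
  have hcs_le_one (j : Fin n) : cs j ≤ 1 :=
    hsum ▸ Finset.single_le_sum (fun k _ ↦ hcs k) (Finset.mem_univ j)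
  refine setLIntegral_eq_top_of_le_const_mul measurableSet_Ioo
    (ENNReal.ofReal_ne_top (r := √(1 + |D|))) (fun τ hτ ↦ ?_) hdiv
  rw [← ENNReal.ofReal_mul (Real.sqrt_nonneg _)]
  apply ENNReal.ofReal_le_ofReal
  rw [mul_left_comm]
  have hcomp := sum_mul_sub_le_mul_sum_add_one Finset.univ (fun j _ ↦ hcs_le_one j)
    (fun j _ ↦ by positivity : ∀ j ∈ Finset.univ, 0 ≤ (f j τ ^ 2)⁻¹) D
  exact mul_le_mul_of_nonneg_left
    (inv_sqrt_le_sqrt_mul_inv_sqrt (sub_pos.2 (hD τ hτ)) (by positivity) hcomp) (by positivity)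

theorem stmt_3 (n : ℕ) (a b : ℝ) (f : Fin n → ℝ → ℝ)
    (hcont : ∀ j, ContinuousOn (f j) (Ioo a b))
    (hpos : ∀ j, ∀ τ ∈ Ioo a b, 0 < f j τ)
    (i : Fin n) (c : ℝ) (hc : c ∈ Ioo a b)
    (hdiv : ∫⁻ τ in Ioo c b,
      ENNReal.ofReal ((f i τ ^ 2)⁻¹ *
        (Real.sqrt ((∑ j, (f j τ ^ 2)⁻¹) + 1))⁻¹) = ⊤) :
    ∀ cs : Fin n → ℝ, (∀ j, 0 ≤ cs j) → (∑ j, cs j = 1) →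
      ∀ D : ℝ, (∀ τ ∈ Ioo c b, D < ∑ j, cs j * (f j τ ^ 2)⁻¹) →
      ∫⁻ τ in Ioo c b,
        ENNReal.ofReal ((f i τ ^ 2)⁻¹ *
          (Real.sqrt ((∑ j, cs j * (f j τ ^ 2)⁻¹) - D))⁻¹) = ⊤ :=
  stmt_3_general n b f i c hdiv
end

section
/- Let $f_1,\ldots,f_n:[d,b)\to(0,\infty)$ be continuous positive functions, fix $i$, and let $\hat c^k=(c_1^k,\ldots,c_n^k)$ be a sequence in the closed simplex $\overline{\Delta}_n=\{\hat c\in[0,1]^n:\sum_j c_j=1\}$ converging to $\hat c^\infty\in\overline{\Delta}_n$. Then $\lim_{k\to\infty}\int_d^b f_i^{-2}\left(\sum_{j=1}^n c_j^k f_j^{-2}\right)^{-1/2}=\int_d^b f_i^{-2}\left(\sum_{j=1}^n c_j^\infty f_j^{-2}\right)^{-1/2}$, where both sides take values in $(0,\infty]$. -/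
/-!
Pointwise the integrands converge, so Fatou's lemma bounds the limit integral by the `liminf`.
For the `limsup`, fix `λ < 1`: eventually `λ² c∞ ≤ cᵏ` coordinatewise, hence
`λ (∑ cᵏ_j f_j⁻²)^{-1/2} ≤ (∑ c∞_j f_j⁻²)^{-1/2}` on the whole interval, and integrating gives
`λ · limsup ≤ ∫ limit`. This comparison replaces a dominating function, so the integrals may
be infinite.
-/

open MeasureTheory Set Filter Topology
open scoped ENNReal

theorem tendsto_lintegral_of_forall_lt_one_eventually_mul_le {α ι : Type*} [MeasurableSpace α]
    {μ : Measure α} {l : Filter ι} [l.NeBot] [l.IsCountablyGenerated]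
    {F : ι → α → ℝ≥0∞} {G : α → ℝ≥0∞} (hF : ∀ k, AEMeasurable (F k) μ)
    (hlim : ∀ᵐ x ∂μ, Tendsto (F · x) l (𝓝 (G x)))
    (hdom : ∀ a < 1, ∀ᶠ k in l, ∀ᵐ x ∂μ, a * F k x ≤ G x) :
    Tendsto (fun k => ∫⁻ x, F k x ∂μ) l (𝓝 (∫⁻ x, G x ∂μ)) := by
  refine tendsto_of_le_liminf_of_limsup_le ?_ ?_
  · calc ∫⁻ x, G x ∂μ = ∫⁻ x, l.liminf (F · x) ∂μ :=
          lintegral_congr_ae (hlim.mono fun x hx => hx.liminf_eq.symm)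
      _ ≤ l.liminf fun k => ∫⁻ x, F k x ∂μ := lintegral_liminf_le' hF
  · refine ENNReal.le_of_forall_lt_one_mul_le fun a ha => ?_
    have ha_top : a ≠ ⊤ := ha.trans ENNReal.one_lt_top |>.ne
    rw [← ENNReal.limsup_const_mul_of_ne_top ha_top]
    refine limsup_le_of_le (by isBoundedDefault) ((hdom a ha).mono fun k hk => ?_)
    rw [← lintegral_const_mul' a _ ha_top]
    exact lintegral_mono_ae hk

theorem sum_mul_pos_of_mem_stdSimplex {ι : Type*} [Fintype ι] {c B : ι → ℝ}
    (hc : c ∈ stdSimplex ℝ ι) (hB : ∀ j, 0 < B j) : 0 < ∑ j, c j * B j := by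
  obtain ⟨j, hj⟩ : ∃ j, 0 < c j := by
    by_contra! h
    have : ∑ j, c j = 0 := Finset.sum_eq_zero fun j _ => le_antisymm (h j) (hc.1 j)
    simp [hc.2] at this
  exact Finset.sum_pos' (fun j _ => mul_nonneg (hc.1 j) (hB j).le)
    ⟨j, Finset.mem_univ j, mul_pos hj (hB j)⟩

theorem eventually_forall_mul_le_of_tendsto {ι κ : Type*} [Finite ι] {l : Filter κ}
    {c : ι → ℝ} {u : κ → ι → ℝ} (hu : Tendsto u l (𝓝 c)) (hu0 : ∀ k j, 0 ≤ u k j)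
    (hc : ∀ j, 0 ≤ c j) {t : ℝ} (ht : t < 1) : ∀ᶠ k in l, ∀ j, t * c j ≤ u k j := by
  refine eventually_all.2 fun j => ?_
  rcases (hc j).eq_or_lt with hcj | hcj
  · exact Eventually.of_forall fun k => by simpa [← hcj] using hu0 k j
  · have : t * c j < c j := by nlinarith
    exact (tendsto_pi_nhds.1 hu j).eventually (eventually_ge_nhds this)

theorem mul_inv_sqrt_sum_le_of_sq_mul_le {ι : Type*} [Fintype ι] {c c' B : ι → ℝ} {t : ℝ}
    (ht : 0 ≤ t) (hB : ∀ j, 0 ≤ B j) (hcc' : ∀ j, t ^ 2 * c j ≤ c' j)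
    (hpos : 0 < ∑ j, c j * B j) :
    t * (√(∑ j, c' j * B j))⁻¹ ≤ (√(∑ j, c j * B j))⁻¹ := by
  have hsqrt : t * √(∑ j, c j * B j) ≤ √(∑ j, c' j * B j) := by
    rw [← Real.sqrt_sq ht, ← Real.sqrt_mul (sq_nonneg t), Finset.mul_sum]
    exact Real.sqrt_le_sqrt (Finset.sum_le_sum fun j _ => by
      rw [← mul_assoc]; exact mul_le_mul_of_nonneg_right (hcc' j) (hB j))
  set x := √(∑ j, c' j * B j)
  set y := √(∑ j, c j * B j)
  have hy : y ≠ 0 := (Real.sqrt_pos.2 hpos).ne'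
  calc t * x⁻¹ = t * y * x⁻¹ * y⁻¹ := by field_simp
    _ ≤ x * x⁻¹ * y⁻¹ := by gcongr
    _ ≤ y⁻¹ := mul_le_of_le_one_left (by positivity) mul_inv_le_one

theorem tendsto_inv_sqrt_sum_mul {ι κ : Type*} [Fintype ι] {l : Filter κ} {c B : ι → ℝ}
    {u : κ → ι → ℝ} (hu : Tendsto u l (𝓝 c)) (hpos : 0 < ∑ j, c j * B j) :
    Tendsto (fun k => (√(∑ j, u k j * B j))⁻¹) l (𝓝 (√(∑ j, c j * B j))⁻¹) := by
  have hsum : Tendsto (fun k => ∑ j, u k j * B j) l (𝓝 (∑ j, c j * B j)) :=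
    tendsto_finsetSum _ fun j _ => (tendsto_pi_nhds.1 hu j).mul_const (B j)
  exact hsum.sqrt.inv₀ (Real.sqrt_pos.2 hpos).ne'

theorem stmt_5_general (n : ℕ) (d b : ℝ) (f : Fin n → ℝ → ℝ)
    (hcont : ∀ j, ContinuousOn (f j) (Ico d b))
    (hpos : ∀ j, ∀ τ ∈ Ico d b, 0 < f j τ)
    (i : Fin n)
    (ck : ℕ → Fin n → ℝ) (cinf : Fin n → ℝ)
    (hck : ∀ k, (∀ j, ck k j ∈ Icc (0:ℝ) 1) ∧ (∑ j, ck k j = 1))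
    (hcinf : (∀ j, cinf j ∈ Icc (0:ℝ) 1) ∧ (∑ j, cinf j = 1))
    (hconv : Tendsto ck atTop (nhds cinf)) :
    Tendsto (fun k => ∫⁻ τ in Ico d b,
        ENNReal.ofReal ((f i τ ^ 2)⁻¹ *
          (Real.sqrt (∑ j, ck k j * (f j τ ^ 2)⁻¹))⁻¹)) atTop
      (nhds (∫⁻ τ in Ico d b,
        ENNReal.ofReal ((f i τ ^ 2)⁻¹ *
          (Real.sqrt (∑ j, cinf j * (f j τ ^ 2)⁻¹))⁻¹))) := by
  have hB : ∀ τ ∈ Ico d b, ∀ j, 0 < (f j τ ^ 2)⁻¹ := fun τ hτ j => by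
    have := hpos j τ hτ; positivity
  have hsum_pos : ∀ τ ∈ Ico d b, 0 < ∑ j, cinf j * (f j τ ^ 2)⁻¹ := fun τ hτ =>
    sum_mul_pos_of_mem_stdSimplex ⟨fun j => (hcinf.1 j).1, hcinf.2⟩ (hB τ hτ)
  have hf : ∀ j, AEMeasurable (f j) (volume.restrict (Ico d b)) := fun j =>
    (hcont j).aemeasurable measurableSet_Ico
  refine tendsto_lintegral_of_forall_lt_one_eventually_mul_le (fun k => by fun_prop) ?_ ?_
  · filter_upwards [ae_restrict_mem measurableSet_Ico] with τ hτ
    exact ENNReal.tendsto_ofReal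
      ((tendsto_inv_sqrt_sum_mul hconv (hsum_pos τ hτ)).const_mul _)
  · intro a ha
    have ht : a.toReal ^ 2 < 1 := by
      have := ENNReal.toReal_lt_of_lt_ofReal (b := 1) (by simpa using ha)
      nlinarith [ENNReal.toReal_nonneg (a := a)]
    filter_upwards [eventually_forall_mul_le_of_tendsto hconv (fun k j => (hck k).1 j |>.1)
      (fun j => (hcinf.1 j).1) ht] with k hk
    filter_upwards [ae_restrict_mem measurableSet_Ico] with τ hτ
    rw [← ENNReal.ofReal_toReal (ha.trans ENNReal.one_lt_top).ne,
      ← ENNReal.ofReal_mul ENNReal.toReal_nonneg, mul_left_comm]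
    exact ENNReal.ofReal_le_ofReal (mul_le_mul_of_nonneg_left
      (mul_inv_sqrt_sum_le_of_sq_mul_le ENNReal.toReal_nonneg (fun j => (hB τ hτ j).le) hk
        (hsum_pos τ hτ)) (hB τ hτ i).le)

theorem stmt_5 (n : ℕ) (d b : ℝ) (hdb : d < b) (f : Fin n → ℝ → ℝ)
    (hcont : ∀ j, ContinuousOn (f j) (Ico d b))
    (hpos : ∀ j, ∀ τ ∈ Ico d b, 0 < f j τ)
    (i : Fin n)
    (ck : ℕ → Fin n → ℝ) (cinf : Fin n → ℝ)
    (hck : ∀ k, (∀ j, ck k j ∈ Icc (0:ℝ) 1) ∧ (∑ j, ck k j = 1))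
    (hcinf : (∀ j, cinf j ∈ Icc (0:ℝ) 1) ∧ (∑ j, cinf j = 1))
    (hconv : Tendsto ck atTop (nhds cinf)) :
    Tendsto (fun k => ∫⁻ τ in Ico d b,
        ENNReal.ofReal ((f i τ ^ 2)⁻¹ *
          (Real.sqrt (∑ j, ck k j * (f j τ ^ 2)⁻¹))⁻¹)) atTop
      (nhds (∫⁻ τ in Ico d b,
        ENNReal.ofReal ((f i τ ^ 2)⁻¹ *
          (Real.sqrt (∑ j, cinf j * (f j τ ^ 2)⁻¹))⁻¹))) :=
  stmt_5_general n d b f hcont hpos i ck cinf hck hcinf hconv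
end

section
/- Let $w_1,\ldots,w_n:(\tau_0,\tau_0')\to(0,\infty)$ and $\nu\geq0$ be continuous, $l_1,\ldots,l_n\geq0$ with $\sum_i l_i>0$, and $k\in(0,1]$. Define $S=\{(c_1,\ldots,c_n)\in[0,\infty)^n:\sum_i c_i=k\text{ and }\sqrt{c_i}\int_{\tau_0}^{\tau_0'}w_i(\sum_j c_jw_j+\nu)^{-1/2}\geq l_i\ \forall i\}$. If $S$ is nonempty, all $l_i>0$, all elements of $S$ have all coordinates positive, and all relevant integrals are finite, then any maximizer $(c_1^M,\ldots,c_n^M)\in S$ of $(c_1,\ldots,c_n)\mapsto\sqrt{c_n}\int_{\tau_0}^{\tau_0'}w_n(\sum_j c_jw_j+\nu)^{-1/2}$ over $S$ satisfies equality in the first $n-1$ defining inequalities: $\sqrt{c_i^M}\int_{\tau_0}^{\tau_0'}w_i(\sum_j c_j^Mw_j+\nu)^{-1/2}=l_i$ for all $i\in\{1,\ldots,n-1\}$. -/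
/-!
If the constraint of an index `i` other than the last were slack at the maximizer `c`, pass to
`c' = (1 + δ) c - δ k eᵢ`. It still has total mass `k`, and since `k wᵢ > 0` and `ν ≥ 0` the
denominator `∑ c'ⱼ wⱼ + ν` lies strictly below `(1 + δ) (∑ cⱼ wⱼ + ν)`, so every integral exceeds
`(1 + δ)^(-1/2)` times its old value. As `√c'ⱼ = √(1 + δ) √cⱼ` for `j ≠ i`, those constraints
survive and the objective strictly increases, while the slack of constraint `i` absorbs the
decrease of `c'ᵢ` once `δ > 0` is small.
-/

open MeasureTheory Set Filter Topology

section IntegralLt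

variable {α : Type*} [MeasurableSpace α] {μ : Measure α} {f g : α → ℝ}

theorem integral_lt_integral_of_ae_lt (hμ : μ ≠ 0) (hf : Integrable f μ) (hg : Integrable g μ)
    (hfg : ∀ᵐ x ∂μ, f x < g x) : ∫ x, f x ∂μ < ∫ x, g x ∂μ := by
  have hsupp : 0 < μ (Function.support (g - f)) := by
    refine pos_iff_ne_zero.2 fun h0 => hμ ?_
    rw [← ae_eq_bot, ← eventually_false_iff_eq_bot]
    filter_upwards [hfg, measure_eq_zero_iff_ae_notMem.1 h0] with x hlt hx
    exact hx (sub_ne_zero.2 hlt.ne')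
  have hpos : 0 < ∫ x, (g - f) x ∂μ :=
    (integral_pos_iff_support_of_nonneg_ae (hfg.mono fun x h => sub_nonneg.2 h.le)
      (hg.sub hf)).2 hsupp
  rw [Pi.sub_def, integral_sub hg hf] at hpos
  linarith

end IntegralLt

theorem inv_sqrt_mul_mul_inv_sqrt_lt {a b t w : ℝ} (ht : 0 ≤ t) (ha : 0 < a) (hab : a < t * b)
    (hw : 0 < w) : (√t)⁻¹ * (w * (√b)⁻¹) < w * (√a)⁻¹ := by
  have hsqrt : √a < √t * √b := Real.sqrt_mul ht b ▸ Real.sqrt_lt_sqrt ha.le hab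
  calc (√t)⁻¹ * (w * (√b)⁻¹) = w * (√t * √b)⁻¹ := by rw [mul_inv]; ring
    _ < w * (√a)⁻¹ := mul_lt_mul_of_pos_left (inv_strictAnti₀ (Real.sqrt_pos.2 ha) hsqrt) hw

theorem sqrt_mul_lt_sqrt_mul_of_inv_sqrt_mul_lt {a t X Y : ℝ} (ha : 0 < a) (ht : 0 < t)
    (h : (√t)⁻¹ * X < Y) : √a * X < √(t * a) * Y := by
  have hst : 0 < √t := Real.sqrt_pos.2 ht
  calc √a * X = √t * √a * ((√t)⁻¹ * X) := by field_simp
    _ < √t * √a * Y := mul_lt_mul_of_pos_left h (by positivity)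
    _ = √(t * a) * Y := by rw [Real.sqrt_mul ht.le]

section Perturb

variable {ι : Type*} [DecidableEq ι]

def perturb (c : ι → ℝ) (i : ι) (k δ : ℝ) : ι → ℝ := (1 + δ) • c - (δ * k) • Pi.single i 1

variable {c : ι → ℝ} {i j : ι} {k δ : ℝ}

theorem perturb_apply_self : perturb c i k δ i = (1 + δ) * c i - δ * k := by
  simp [perturb]

theorem perturb_apply_of_ne (hj : j ≠ i) : perturb c i k δ j = (1 + δ) * c j := by
  simp [perturb, hj]

theorem perturb_zero : perturb c i k 0 = c := by
  simp [perturb]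

theorem continuous_perturb : Continuous (perturb c i k) := by
  unfold perturb; fun_prop

theorem sum_perturb [Fintype ι] : ∑ j, perturb c i k δ j = (1 + δ) * ∑ j, c j - δ * k := by
  simp [perturb, Finset.sum_sub_distrib, Finset.mul_sum, Pi.single_apply]

theorem sum_perturb_mul [Fintype ι] (w : ι → ℝ) :
    ∑ j, perturb c i k δ j * w j = (1 + δ) * ∑ j, c j * w j - δ * k * w i := by
  simp [perturb, sub_mul, Finset.sum_sub_distrib, Finset.mul_sum, Pi.single_apply, mul_assoc]

end Perturb

theorem eventually_forall_perturb_pos {ι : Type*} [Finite ι] [DecidableEq ι] {c : ι → ℝ} (i : ι)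
    (k : ℝ) (hc : ∀ j, 0 < c j) : ∀ᶠ δ in 𝓝 0, ∀ j, 0 < perturb c i k δ j :=
  eventually_all.2 fun j => continuousAt_const.eventually_lt
    ((continuous_apply j).comp continuous_perturb).continuousAt (by simpa [perturb_zero] using hc j)

theorem eventually_lt_sqrt_perturb_mul {ι : Type*} [DecidableEq ι] {c : ι → ℝ} {i : ι} (k : ℝ)
    {l X : ℝ} (hlt : l < √(c i) * X) :
    ∀ᶠ δ in 𝓝 0, l < √(perturb c i k δ i) * ((√(1 + δ))⁻¹ * X) := by
  have hcont : ContinuousAt (fun δ => √(perturb c i k δ i) * ((√(1 + δ))⁻¹ * X)) 0 := by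
    simp only [perturb_apply_self]
    exact ContinuousAt.mul (by fun_prop)
      (((Real.continuous_sqrt.comp (by fun_prop)).continuousAt.inv₀ (by simp)).mul
        continuousAt_const)
  exact continuousAt_const.eventually_lt hcont (by simpa [perturb_zero] using hlt)

section InvSqrtIntegral

variable {α ι : Type*} [Fintype ι]

noncomputable def invSqrtIntegrand (w : ι → α → ℝ) (ν : α → ℝ) (c : ι → ℝ) (j : ι) (x : α) : ℝ :=
  w j x * (√((∑ i, c i * w i x) + ν x))⁻¹

def feasibleSet [MeasurableSpace α] (μ : Measure α) (w : ι → α → ℝ) (ν : α → ℝ) (l : ι → ℝ)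
    (k : ℝ) : Set (ι → ℝ) :=
  {c | (∀ i, 0 ≤ c i) ∧ (∑ i, c i = k) ∧
    ∀ i, l i ≤ √(c i) * ∫ x, invSqrtIntegrand w ν c i x ∂μ}

variable [DecidableEq ι] {w : ι → α → ℝ} {ν : α → ℝ} {c : ι → ℝ} {i j : ι} {k δ : ℝ}

theorem inv_sqrt_mul_invSqrtIntegrand_lt_perturb {x : α} (hw : ∀ j, 0 < w j x) (hν : 0 ≤ ν x)
    (hk : 0 < k) (hδ : 0 < δ) (hc' : ∀ j, 0 < perturb c i k δ j) :
    (√(1 + δ))⁻¹ * invSqrtIntegrand w ν c j x < invSqrtIntegrand w ν (perturb c i k δ) j x := by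
  have hpos : 0 < (∑ j, perturb c i k δ j * w j x) + ν x :=
    add_pos_of_pos_of_nonneg
      (Finset.sum_pos (fun j _ => mul_pos (hc' j) (hw j)) ⟨i, Finset.mem_univ i⟩) hν
  have hlt : (∑ j, perturb c i k δ j * w j x) + ν x < (1 + δ) * ((∑ j, c j * w j x) + ν x) := by
    rw [sum_perturb_mul]
    nlinarith [mul_pos (mul_pos hδ hk) (hw i), mul_nonneg hδ.le hν]
  exact inv_sqrt_mul_mul_inv_sqrt_lt (by linarith) hpos hlt (hw j)

variable [MeasurableSpace α] {μ : Measure α}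

theorem inv_sqrt_mul_integral_lt_integral_perturb (hμ : μ ≠ 0) (hw : ∀ᵐ x ∂μ, ∀ j, 0 < w j x)
    (hν : ∀ᵐ x ∂μ, 0 ≤ ν x) (hk : 0 < k) (hδ : 0 < δ) (hc' : ∀ j, 0 < perturb c i k δ j)
    (hint : Integrable (invSqrtIntegrand w ν c j) μ)
    (hint' : Integrable (invSqrtIntegrand w ν (perturb c i k δ) j) μ) :
    (√(1 + δ))⁻¹ * ∫ x, invSqrtIntegrand w ν c j x ∂μ <
      ∫ x, invSqrtIntegrand w ν (perturb c i k δ) j x ∂μ := by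
  rw [← integral_const_mul]
  refine integral_lt_integral_of_ae_lt hμ (hint.const_mul _) hint' ?_
  filter_upwards [hw, hν] with x hwx hνx
  exact inv_sqrt_mul_invSqrtIntegrand_lt_perturb hwx hνx hk hδ hc'

theorem sqrt_mul_integral_eq_of_isMaxOn {l : ι → ℝ} {m : ι} (hμ : μ ≠ 0)
    (hw : ∀ᵐ x ∂μ, ∀ j, 0 < w j x) (hν : ∀ᵐ x ∂μ, 0 ≤ ν x) (hk : 0 < k)
    (hint : ∀ c : ι → ℝ, (∀ j, 0 ≤ c j) → ∑ j, c j = k →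
      ∀ j, Integrable (invSqrtIntegrand w ν c j) μ)
    (hc : c ∈ feasibleSet μ w ν l k) (hpos : ∀ j, 0 < c j)
    (hmax : IsMaxOn (fun c => √(c m) * ∫ x, invSqrtIntegrand w ν c m x ∂μ)
      (feasibleSet μ w ν l k) c) (hi : i ≠ m) :
    √(c i) * ∫ x, invSqrtIntegrand w ν c i x ∂μ = l i := by
  obtain ⟨hnonneg, hsum, hle⟩ := hc
  refine (hle i).antisymm' (not_lt.1 fun hlt => ?_)
  have hsmall := (eventually_forall_perturb_pos i k hpos).and (eventually_lt_sqrt_perturb_mul k hlt)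
  obtain ⟨δ, ⟨hpos', hmargin⟩, hδ⟩ :=
    ((hsmall.filter_mono (nhdsWithin_le_nhds (s := Ioi 0))).and self_mem_nhdsWithin).exists
  set c' := perturb c i k δ
  have hsum' : ∑ j, c' j = k := by rw [sum_perturb, hsum]; ring
  have hI : ∀ j, (√(1 + δ))⁻¹ * ∫ x, invSqrtIntegrand w ν c j x ∂μ <
      ∫ x, invSqrtIntegrand w ν c' j x ∂μ := fun j =>
    inv_sqrt_mul_integral_lt_integral_perturb hμ hw hν hk hδ hpos' (hint c hnonneg hsum j)
      (hint c' (fun j => (hpos' j).le) hsum' j)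
  have hgain : ∀ j ≠ i, √(c j) * ∫ x, invSqrtIntegrand w ν c j x ∂μ <
      √(c' j) * ∫ x, invSqrtIntegrand w ν c' j x ∂μ := fun j hj => by
    rw [show c' j = (1 + δ) * c j from perturb_apply_of_ne hj]
    exact sqrt_mul_lt_sqrt_mul_of_inv_sqrt_mul_lt (hpos j) (by linarith) (hI j)
  have hmem : c' ∈ feasibleSet μ w ν l k := by
    refine ⟨fun j => (hpos' j).le, hsum', fun j => ?_⟩
    by_cases hj : j = i
    · subst hj
      exact hmargin.le.trans (mul_le_mul_of_nonneg_left (hI j).le (Real.sqrt_nonneg _))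
    · exact (hle j).trans (hgain j hj).le
  exact (hgain m hi.symm).not_ge (isMaxOn_iff.1 hmax c' hmem)

end InvSqrtIntegral

theorem stmt_9_general (n : ℕ) (τ0 τ0' : ℝ) (hτ : τ0 < τ0')
    (w : Fin (n + 1) → ℝ → ℝ) (ν : ℝ → ℝ)
    (hwp : ∀ i, ∀ τ ∈ Ioo τ0 τ0', 0 < w i τ) (hνp : ∀ τ ∈ Ioo τ0 τ0', 0 ≤ ν τ)
    (l : Fin (n + 1) → ℝ)
    (k : ℝ) (hk : k ∈ Ioc (0:ℝ) 1)
    (S : Set (Fin (n + 1) → ℝ))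
    (hS : S = {c | (∀ i, 0 ≤ c i) ∧ (∑ i, c i = k) ∧
      ∀ i, l i ≤ Real.sqrt (c i) *
        (∫ τ in Ioo τ0 τ0', w i τ * (Real.sqrt ((∑ j, c j * w j τ) + ν τ))⁻¹)})
    (hSpos : ∀ c ∈ S, ∀ i, 0 < c i)
    (hfin : ∀ c : Fin (n + 1) → ℝ, (∀ i, 0 ≤ c i) → (∑ i, c i = k) →
      ∀ i, IntegrableOn
        (fun τ => w i τ * (Real.sqrt ((∑ j, c j * w j τ) + ν τ))⁻¹) (Ioo τ0 τ0'))
    (cM : Fin (n + 1) → ℝ) (hcM : cM ∈ S)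
    (hmax : ∀ c ∈ S,
      Real.sqrt (c (Fin.last n)) *
        (∫ τ in Ioo τ0 τ0', w (Fin.last n) τ * (Real.sqrt ((∑ j, c j * w j τ) + ν τ))⁻¹) ≤
      Real.sqrt (cM (Fin.last n)) *
        (∫ τ in Ioo τ0 τ0', w (Fin.last n) τ * (Real.sqrt ((∑ j, cM j * w j τ) + ν τ))⁻¹)) :
    ∀ i, i ≠ Fin.last n →
      Real.sqrt (cM i) *
        (∫ τ in Ioo τ0 τ0', w i τ * (Real.sqrt ((∑ j, cM j * w j τ) + ν τ))⁻¹) = l i := by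
  intro i hi
  subst hS
  have hμ : volume.restrict (Ioo τ0 τ0') ≠ 0 := by simp [hτ]
  exact sqrt_mul_integral_eq_of_isMaxOn hμ
    ((ae_restrict_mem measurableSet_Ioo).mono fun τ hτ j => hwp j τ hτ)
    ((ae_restrict_mem measurableSet_Ioo).mono hνp) hk.1 hfin hcM (hSpos cM hcM)
    (isMaxOn_iff.2 hmax) hi

theorem stmt_9 (n : ℕ) (τ0 τ0' : ℝ) (hτ : τ0 < τ0')
    (w : Fin (n + 1) → ℝ → ℝ) (ν : ℝ → ℝ)
    (hw : ∀ i, ContinuousOn (w i) (Ioo τ0 τ0')) (hν : ContinuousOn ν (Ioo τ0 τ0'))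
    (hwp : ∀ i, ∀ τ ∈ Ioo τ0 τ0', 0 < w i τ) (hνp : ∀ τ ∈ Ioo τ0 τ0', 0 ≤ ν τ)
    (l : Fin (n + 1) → ℝ) (hl : ∀ i, 0 < l i)
    (k : ℝ) (hk : k ∈ Ioc (0:ℝ) 1)
    (S : Set (Fin (n + 1) → ℝ))
    (hS : S = {c | (∀ i, 0 ≤ c i) ∧ (∑ i, c i = k) ∧
      ∀ i, l i ≤ Real.sqrt (c i) *
        (∫ τ in Ioo τ0 τ0', w i τ * (Real.sqrt ((∑ j, c j * w j τ) + ν τ))⁻¹)})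
    (hSne : S.Nonempty)
    (hSpos : ∀ c ∈ S, ∀ i, 0 < c i)
    (hfin : ∀ c : Fin (n + 1) → ℝ, (∀ i, 0 ≤ c i) → (∑ i, c i = k) →
      ∀ i, IntegrableOn
        (fun τ => w i τ * (Real.sqrt ((∑ j, c j * w j τ) + ν τ))⁻¹) (Ioo τ0 τ0'))
    (cM : Fin (n + 1) → ℝ) (hcM : cM ∈ S)
    (hmax : ∀ c ∈ S,
      Real.sqrt (c (Fin.last n)) *
        (∫ τ in Ioo τ0 τ0', w (Fin.last n) τ * (Real.sqrt ((∑ j, c j * w j τ) + ν τ))⁻¹) ≤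
      Real.sqrt (cM (Fin.last n)) *
        (∫ τ in Ioo τ0 τ0', w (Fin.last n) τ * (Real.sqrt ((∑ j, cM j * w j τ) + ν τ))⁻¹)) :
    ∀ i, i ≠ Fin.last n →
      Real.sqrt (cM i) *
        (∫ τ in Ioo τ0 τ0', w i τ * (Real.sqrt ((∑ j, cM j * w j τ) + ν τ))⁻¹) = l i :=
  stmt_9_general n τ0 τ0' hτ w ν hwp hνp l k hk S hS hSpos hfin cM hcM hmax
end

section
/- Let $\mu_1,\ldots,\mu_n:(0,1)^{n-1}\times[K^-,K^+]\to\mathbb{R}$ be continuous with $\mu_1\equiv0$, and suppose for each $\delta>0$ there exists $\epsilon>0$ such that $\mu_i(\hat c,K)<\mu_j(\hat c,K)$ whenever $c_i\leq\epsilon$ and $c_j\geq\delta$ (where $\hat c\in\Delta_n$ corresponds to $\hat y\in(0,1)^{n-1}$ via $y_t=c_{t+1}/(c_1+\cdots+c_{t+1})$ for $t<n-1$ and $y_{n-1}=c_n$). Then there exist continuous functions $\tilde\mu_1,\ldots,\tilde\mu_n:[-1,2]^{n-1}\times[K^-,K^+]\to\mathbb{R}$ with $\tilde\mu_1\equiv0$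 and constants $m_i<0<\bar m_i$ ($i=2,\ldots,n$) such that: (i) if $\tilde\mu_2(\hat y,K)=\cdots=\tilde\mu_n(\hat y,K)=0$ then $\hat y\in(0,1)^{n-1}$ and $\mu_2(\hat y,K)=\cdots=\mu_n(\hat y,K)=0$; (ii) $\tilde\mu_i\equiv m_i$ on $\{y_{i-1}=-1\}$ and $\tilde\mu_i\equiv\bar m_i$ on $\{y_{i-1}=2\}$; (iii) there is an affine map on $\mathbb{R}^{n-1}$ whose components coincide with $(\tilde\mu_2,\ldots,\tilde\mu_n)$ on $\partial[-1,2]^{n-1}\times\{K\}$ for every $K$. -/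
open Set

/-- The homeomorphism `𝒴` from the open simplex `Δ_{n+1} ⊂ (0,1)^{n+1}` to the
open cube `(0,1)^n`: `y t = c (t+1) / (c 0 + ⋯ + c (t+1))` for `t < n - 1`,
and `y (n-1) = c n` (the last coordinate). -/
noncomputable def Ymap (n : ℕ) (c : Fin (n + 1) → ℝ) : Fin n → ℝ := fun t =>
  if t.val = n - 1 then c (Fin.last n)
  else c t.succ / ∑ s ∈ Finset.univ.filter (fun s : Fin (n + 1) => s.val ≤ t.val + 1), c s

noncomputable def cinv (n : ℕ) (z : Fin n → ℝ) : Fin (n + 1) → ℝ := fun j =>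
  (if h : j = 0 then 1 else z (j.pred h)) *
    ∏ t ∈ Finset.univ.filter (fun t : Fin n => (j : ℕ) ≤ (t : ℕ)), (1 - z t)

lemma cinv_psum {n : ℕ} (z : Fin n → ℝ) (k : ℕ) (hk : k ≤ n) :
    ∑ j ∈ Finset.univ.filter (fun j : Fin (n + 1) => (j : ℕ) ≤ k), cinv n z j
      = ∏ t ∈ Finset.univ.filter (fun t : Fin n => k ≤ (t : ℕ)), (1 - z t) := by
  induction k with
  | zero =>
    have h1 : Finset.univ.filter (fun j : Fin (n + 1) => (j : ℕ) ≤ 0) = {0} := by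
      ext j; simp only [Finset.mem_filter, Finset.mem_univ, true_and, Finset.mem_singleton, Fin.ext_iff, Fin.val_zero]; omega
    have h2 : Finset.univ.filter (fun t : Fin n => 0 ≤ (t : ℕ)) = Finset.univ := by simp
    rw [h1, h2, Finset.sum_singleton]
    simp [cinv]
  | succ k ih =>
    have hkn : k < n := hk
    set jk : Fin (n + 1) := ⟨k + 1, by omega⟩ with hjk
    set tk : Fin n := ⟨k, hkn⟩ with htk
    have hsplit : Finset.univ.filter (fun j : Fin (n + 1) => (j : ℕ) ≤ k + 1)
        = insert jk (Finset.univ.filter (fun j : Fin (n + 1) => (j : ℕ) ≤ k)) := by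
      ext j; simp [hjk, Fin.ext_iff]; omega
    have hsplit2 : Finset.univ.filter (fun t : Fin n => k ≤ (t : ℕ))
        = insert tk (Finset.univ.filter (fun t : Fin n => k + 1 ≤ (t : ℕ))) := by
      ext t; simp [htk, Fin.ext_iff]; omega
    have hnm : jk ∉ Finset.univ.filter (fun j : Fin (n + 1) => (j : ℕ) ≤ k) := by simp [hjk]
    have hnm2 : tk ∉ Finset.univ.filter (fun t : Fin n => k + 1 ≤ (t : ℕ)) := by simp [htk]
    rw [hsplit, Finset.sum_insert hnm, ih (le_of_lt hkn), hsplit2, Finset.prod_insert hnm2]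
    have hj0 : jk ≠ 0 := by simp [hjk, Fin.ext_iff]
    have hpred : jk.pred hj0 = tk := by
      simp [Fin.ext_iff, hjk, htk]
    have hfil : (Finset.univ.filter (fun t : Fin n => (jk : ℕ) ≤ (t : ℕ)))
        = Finset.univ.filter (fun t : Fin n => k + 1 ≤ (t : ℕ)) := by
      simp [hjk]
    simp only [cinv, dif_neg hj0, hpred, hfil]
    ring

lemma cinv_sum {n : ℕ} (z : Fin n → ℝ) : ∑ j, cinv n z j = 1 := by
  have h := cinv_psum z n le_rfl
  have h1 : Finset.univ.filter (fun j : Fin (n + 1) => (j : ℕ) ≤ n) = Finset.univ := by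
    ext j; simp [Nat.le_of_lt_succ j.isLt, Nat.lt_succ_iff.mp j.isLt]
  have h2 : Finset.univ.filter (fun t : Fin n => n ≤ (t : ℕ)) = ∅ := by
    ext t; simp
  rw [h1, h2] at h
  simpa using h

lemma cinv_pos {n : ℕ} {z : Fin n → ℝ} (hz : ∀ t, 0 < z t ∧ z t < 1) :
    ∀ j, 0 < cinv n z j := by
  intro j
  apply mul_pos
  · split
    · norm_num
    · exact (hz _).1
  · exact Finset.prod_pos fun t _ => by linarith [(hz t).2]

lemma Ymap_cinv {n : ℕ} {z : Fin n → ℝ} (hz : ∀ t, 0 < z t ∧ z t < 1) :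
    Ymap n (cinv n z) = z := by
  funext t
  have hn : 0 < n := t.pos
  unfold Ymap
  by_cases ht : (t : ℕ) = n - 1
  · rw [if_pos ht]
    have hlast0 : (Fin.last n) ≠ 0 := by
      simp [Fin.ext_iff]; omega
    have hfil : Finset.univ.filter (fun t' : Fin n => ((Fin.last n : Fin (n+1)) : ℕ) ≤ (t' : ℕ)) = ∅ := by
      ext t'; simp
    have hpred : (Fin.last n).pred hlast0 = t := by
      simp [Fin.ext_iff, ht]
    simp only [cinv, dif_neg hlast0, hpred, hfil, Finset.prod_empty, mul_one]
  · rw [if_neg ht]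
    have h1 : (t : ℕ) + 1 ≤ n := t.isLt
    rw [cinv_psum z ((t : ℕ) + 1) h1]
    have hs0 : t.succ ≠ (0 : Fin (n + 1)) := Fin.succ_ne_zero t
    have hfil : (Finset.univ.filter (fun t' : Fin n => ((t.succ : Fin (n+1)) : ℕ) ≤ (t' : ℕ)))
        = Finset.univ.filter (fun t' : Fin n => (t : ℕ) + 1 ≤ (t' : ℕ)) := by
      simp
    have hP : (0:ℝ) < ∏ t' ∈ Finset.univ.filter (fun t' : Fin n => (t : ℕ) + 1 ≤ (t' : ℕ)), (1 - z t') :=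
      Finset.prod_pos fun t' _ => by linarith [(hz t').2]
    simp only [cinv, dif_neg hs0, Fin.pred_succ, hfil]
    rw [mul_div_assoc, div_self hP.ne', mul_one]

lemma cinv_le_pred {n : ℕ} {z : Fin n → ℝ} (hz : ∀ t, 0 < z t ∧ z t < 1)
    (j : Fin (n + 1)) (hj : j ≠ 0) : cinv n z j ≤ z (j.pred hj) := by
  rw [cinv, dif_neg hj]
  calc z (j.pred hj) * ∏ t ∈ Finset.univ.filter (fun t : Fin n => (j : ℕ) ≤ (t : ℕ)), (1 - z t)
      ≤ z (j.pred hj) * 1 := by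
        apply mul_le_mul_of_nonneg_left _ (hz _).1.le
        apply Finset.prod_le_one
        · intro t _; linarith [(hz t).2]
        · intro t _; linarith [(hz t).1]
    _ = z (j.pred hj) := mul_one _

lemma cinv_zero_le {n : ℕ} {z : Fin n → ℝ} (hz : ∀ t, 0 < z t ∧ z t < 1)
    (t : Fin n) : cinv n z 0 ≤ 1 - z t := by
  have hfil : Finset.univ.filter (fun t' : Fin n => ((0 : Fin (n+1)) : ℕ) ≤ (t' : ℕ)) = Finset.univ := by
    simp
  rw [cinv, dif_pos rfl, hfil, one_mul, ← Finset.mul_prod_erase _ _ (Finset.mem_univ t)]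
  calc (1 - z t) * ∏ t' ∈ Finset.univ.erase t, (1 - z t')
      ≤ (1 - z t) * 1 := by
        apply mul_le_mul_of_nonneg_left _ (by linarith [(hz t).2])
        apply Finset.prod_le_one
        · intro t' _; linarith [(hz t').2]
        · intro t' _; linarith [(hz t').1]
    _ = 1 - z t := mul_one _

lemma cinv_delta {n : ℕ} {z : Fin n → ℝ} (hz : ∀ t, 0 < z t ∧ z t < 1) :
    ∃ j : Fin (n + 1), (1/2 : ℝ) ^ n ≤ cinv n z j ∧
      (j = 0 ∨ ∃ h : j ≠ 0, (1/2 : ℝ) ≤ z (j.pred h)) := by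
  by_cases hall : ∀ t, z t < 1/2
  · refine ⟨0, ?_, Or.inl rfl⟩
    have hfil : Finset.univ.filter (fun t' : Fin n => ((0 : Fin (n+1)) : ℕ) ≤ (t' : ℕ)) = Finset.univ := by
      simp
    rw [cinv, dif_pos rfl, hfil, one_mul]
    calc (1/2 : ℝ) ^ n = ∏ _t : Fin n, (1/2 : ℝ) := by
          rw [Finset.prod_const, Finset.card_univ, Fintype.card_fin]
      _ ≤ ∏ t : Fin n, (1 - z t) := by
          apply Finset.prod_le_prod
          · intro t _; norm_num
          · intro t _; linarith [hall t]
  · push_neg at hall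
    obtain ⟨t0, ht0⟩ := hall
    set s := Finset.univ.filter (fun t : Fin n => (1/2 : ℝ) ≤ z t) with hs
    have hsne : s.Nonempty := ⟨t0, by simp only [hs, Finset.mem_filter]; exact ⟨Finset.mem_univ _, ht0⟩⟩
    set tm := s.max' hsne with htm
    have htms : (1/2 : ℝ) ≤ z tm := (Finset.mem_filter.mp (s.max'_mem hsne)).2
    refine ⟨tm.succ, ?_, Or.inr ⟨Fin.succ_ne_zero _, by rw [Fin.pred_succ]; exact htms⟩⟩
    rw [cinv, dif_neg (Fin.succ_ne_zero _), Fin.pred_succ]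
    set F := Finset.univ.filter (fun t : Fin n => ((tm.succ : Fin (n+1)) : ℕ) ≤ (t : ℕ)) with hF
    have hbig : ∀ t ∈ F, (1/2 : ℝ) ≤ 1 - z t := by
      intro t htF
      have htv : (tm : ℕ) + 1 ≤ (t : ℕ) := by
        rw [hF] at htF; simpa using htF
      have : t ∉ s := by
        intro hmem
        have := s.le_max' t hmem
        rw [← htm] at this
        have : (t : ℕ) ≤ (tm : ℕ) := this
        omega
      rw [hs] at this
      simp at this
      linarith
    have hcard : F.card + 1 ≤ n := by
      have hsub : F ⊆ Finset.univ.erase tm := by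
        intro t htF
        have htv : (tm : ℕ) + 1 ≤ (t : ℕ) := by rw [hF] at htF; simpa using htF
        refine Finset.mem_erase.mpr ⟨?_, Finset.mem_univ _⟩
        intro h; rw [h] at htv; omega
      have := Finset.card_le_card hsub
      rw [Finset.card_erase_of_mem (Finset.mem_univ _), Finset.card_univ, Fintype.card_fin] at this
      have hn : 0 < n := tm.pos
      omega
    calc (1/2 : ℝ) ^ n ≤ (1/2 : ℝ) ^ (F.card + 1) := by
          apply pow_le_pow_of_le_one (by norm_num) (by norm_num) hcard
      _ = (1/2) * (1/2 : ℝ) ^ F.card := by ring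
      _ ≤ z tm * ∏ t ∈ F, (1 - z t) := by
          apply mul_le_mul htms _ (by positivity) (hz tm).1.le
          calc (1/2 : ℝ) ^ F.card = ∏ _t ∈ F, (1/2 : ℝ) := by rw [Finset.prod_const]
            _ ≤ ∏ t ∈ F, (1 - z t) := Finset.prod_le_prod (by intros; norm_num) hbig

theorem stmt_10 (n : ℕ) (Km Kp : ℝ) (hK : Km ≤ Kp)
    (μ : Fin (n + 1) → (Fin n → ℝ) → ℝ → ℝ)
    (hμcont : ∀ i, ContinuousOn (fun p : (Fin n → ℝ) × ℝ => μ i p.1 p.2)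
      ((univ.pi fun _ : Fin n => Ioo (0:ℝ) 1) ×ˢ Icc Km Kp))
    (hμ0 : ∀ y K, μ 0 y K = 0)
    (hbd : ∀ δ > (0:ℝ), ∃ ε > (0:ℝ), ∀ c : Fin (n + 1) → ℝ,
      (∀ j, 0 < c j) → (∑ j, c j = 1) →
      ∀ K ∈ Icc Km Kp, ∀ i j, c i ≤ ε → δ ≤ c j →
        μ i (Ymap n c) K < μ j (Ymap n c) K) :
    ∃ (μt : Fin (n + 1) → (Fin n → ℝ) → ℝ → ℝ) (m mbar : Fin (n + 1) → ℝ),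
      (∀ i, ContinuousOn (fun p : (Fin n → ℝ) × ℝ => μt i p.1 p.2)
        (Icc (-1 : Fin n → ℝ) 2 ×ˢ Icc Km Kp)) ∧
      (∀ y K, μt 0 y K = 0) ∧
      (∀ i, i ≠ 0 → m i < 0 ∧ 0 < mbar i) ∧
      -- (i) zeros of the extensions are zeros of the original functions, inside the open cube
      (∀ y ∈ Icc (-1 : Fin n → ℝ) 2, ∀ K ∈ Icc Km Kp,
        (∀ i, i ≠ 0 → μt i y K = 0) →
          (∀ t, y t ∈ Ioo (0:ℝ) 1) ∧ ∀ i, μ i y K = 0) ∧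
      -- (ii) constancy on the faces y_{i-1} = -1 and y_{i-1} = 2
      (∀ i (hi : i ≠ 0), ∀ y ∈ Icc (-1 : Fin n → ℝ) 2, ∀ K ∈ Icc Km Kp,
        (y (i.pred hi) = -1 → μt i y K = m i) ∧
        (y (i.pred hi) = 2 → μt i y K = mbar i)) ∧
      -- (iii) an affine map agreeing with the extensions on the boundary of the cube
      (∃ A : (Fin n → ℝ) →ᵃ[ℝ] (Fin n → ℝ),
        ∀ y ∈ Icc (-1 : Fin n → ℝ) 2, (∃ t, y t = -1 ∨ y t = 2) →
          ∀ K ∈ Icc Km Kp, ∀ i (hi : i ≠ 0), A y (i.pred hi) = μt i y K) := by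
  classical
  obtain ⟨ε, hεpos, hE⟩ := hbd ((1/2 : ℝ) ^ n) (by positivity)
  set a : ℝ := min ε ((1/2) ^ (n + 2)) with ha_def
  have ha0 : 0 < a := lt_min hεpos (by positivity)
  have haε : a ≤ ε := min_le_left _ _
  have ha4 : a ≤ 1/4 := by
    calc a ≤ (1/2:ℝ)^(n+2) := min_le_right _ _
    _ ≤ (1/2:ℝ)^2 := pow_le_pow_of_le_one (by norm_num) (by norm_num) (by omega)
    _ = 1/4 := by norm_num
  have hpn : (0:ℝ) < (1/2)^n := by positivity
  have haδ : a < (1/2:ℝ)^n := by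
    have h1 : a ≤ (1/2:ℝ)^(n+2) := min_le_right _ _
    have h2 : (1/2:ℝ)^(n+2) = (1/2)^n * (1/4) := by rw [pow_add]; norm_num
    nlinarith
  set b : ℝ := 1 - a with hb_def
  have hb34 : 3/4 ≤ b := by rw [hb_def]; linarith
  have hb1 : b < 1 := by rw [hb_def]; linarith
  have hab : a ≤ b := by rw [hb_def]; linarith
  set g : ℝ → ℝ := fun s => max (max ((a - s) / (a + 1)) ((s - b) / (2 - b))) 0 with hg_def
  set θ : (Fin n → ℝ) → ℝ := fun y => min (∑ t, g (y t)) 1 with hθ_def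
  set Z : (Fin n → ℝ) → Fin n → ℝ := fun y t => min (max (y t) a) b with hZ_def
  set μt : Fin (n+1) → (Fin n → ℝ) → ℝ → ℝ := fun i y K =>
    if h : i = 0 then 0
    else (1 - θ y) * μ i (Z y) K + θ y * ((2 * y (i.pred h) - 1) / 3) with hμt_def
  -- basic facts
  have hg0 : ∀ s, 0 ≤ g s := fun s => le_max_right _ _
  have hgin : ∀ s, a ≤ s → s ≤ b → g s = 0 := by
    intro s h1 h2
    rw [hg_def]
    apply max_eq_right
    apply max_le
    · apply div_nonpos_of_nonpos_of_nonneg <;> linarith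
    · apply div_nonpos_of_nonpos_of_nonneg <;> linarith
  have hgm1 : g (-1) = 1 := by
    rw [hg_def]
    have h1 : (a - (-1)) / (a + 1) = 1 := by
      rw [show a - (-1) = a + 1 by ring, div_self (by linarith)]
    have h2 : ((-1:ℝ) - b) / (2 - b) ≤ 1 := by
      apply div_le_one_of_le₀ <;> linarith
    simp only [h1]
    rw [max_eq_left h2, max_eq_left (by norm_num)]
  have hg2 : g 2 = 1 := by
    rw [hg_def]
    have h1 : ((2:ℝ) - b) / (2 - b) = 1 := div_self (by linarith)
    have h2 : (a - 2) / (a + 1) ≤ 1 := by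
      apply div_le_one_of_le₀ <;> linarith
    simp only [h1]
    rw [max_eq_right h2, max_eq_left (by norm_num)]
  have hθle1 : ∀ y, θ y ≤ 1 := fun y => min_le_right _ _
  have hθnn : ∀ y, 0 ≤ θ y := fun y =>
    le_min (Finset.sum_nonneg fun t _ => hg0 _) zero_le_one
  have hθeq1 : ∀ (y : Fin n → ℝ) (t : Fin n), g (y t) = 1 → θ y = 1 := by
    intro y t h
    have h1 : (1:ℝ) ≤ ∑ t', g (y t') := by
      calc (1:ℝ) = g (y t) := h.symm
      _ ≤ ∑ t', g (y t') := Finset.single_le_sum (fun t' _ => hg0 _) (Finset.mem_univ t)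
    rw [hθ_def]
    exact min_eq_right h1
  have hZin : ∀ (y : Fin n → ℝ) (t : Fin n), a ≤ Z y t ∧ Z y t ≤ b := by
    intro y t
    rw [hZ_def]
    exact ⟨le_min (le_max_right _ _) hab, min_le_right _ _⟩
  have hZ01 : ∀ (y : Fin n → ℝ) (t : Fin n), 0 < Z y t ∧ Z y t < 1 := fun y t =>
    ⟨lt_of_lt_of_le ha0 (hZin y t).1, lt_of_le_of_lt (hZin y t).2 hb1⟩
  have hgc : Continuous g := by
    rw [hg_def]
    exact (((continuous_const.sub continuous_id).div_const _).max
      ((continuous_id.sub continuous_const).div_const _)).max continuous_const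
  have hθc : Continuous θ := by
    rw [hθ_def]
    exact (continuous_finset_sum _ fun t _ => hgc.comp (continuous_apply t)).min continuous_const
  have hZc : Continuous Z := by
    rw [hZ_def]
    exact continuous_pi fun t => ((continuous_apply t).max continuous_const).min continuous_const
  refine ⟨μt, fun _ => -1, fun _ => 1, ?_, ?_, ?_, ?_, ?_, ?_⟩
  · -- continuity
    intro i
    by_cases hi : i = 0
    · simp only [hμt_def, hi, dif_pos]
      exact continuousOn_const
    · simp only [hμt_def, dif_neg hi]
      apply ContinuousOn.add
      · apply ContinuousOn.mul
        · exact ((continuous_const.sub hθc).comp continuous_fst).continuousOn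
        · apply (hμcont i).comp
            (((hZc.comp continuous_fst).prodMk continuous_snd).continuousOn)
          intro p hp
          rw [Set.mem_prod]
          refine ⟨?_, (Set.mem_prod.mp hp).2⟩
          rw [Set.mem_univ_pi]
          intro t
          exact ⟨(hZ01 p.1 t).1, (hZ01 p.1 t).2⟩
      · have : Continuous (fun p : (Fin n → ℝ) × ℝ =>
            θ p.1 * ((2 * p.1 (i.pred hi) - 1) / 3)) := by
          apply (hθc.comp continuous_fst).mul
          exact ((continuous_const.mul ((continuous_apply (i.pred hi)).comp continuous_fst)).sub
            continuous_const).div_const 3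
        exact this.continuousOn
  · -- μt 0 = 0
    intro y K
    simp [hμt_def]
  · -- m, mbar signs
    intro i _
    norm_num
  · -- (i) zeros
    intro y _ K hK hzero
    have key : ∀ t, a ≤ y t ∧ y t ≤ b := by
      by_contra hcon
      push_neg at hcon
      obtain ⟨t0, ht0⟩ := hcon
      have ht0' : y t0 < a ∨ b < y t0 := by
        by_cases h : a ≤ y t0
        · exact Or.inr (ht0 h)
        · exact Or.inl (lt_of_not_ge h)
      rcases lt_or_eq_of_le (hθle1 y) with hθlt | hθ1'
      · -- θ y < 1
        have hgpos : 0 < g (y t0) := by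
          rcases ht0' with h | h
          · have h1 : 0 < (a - y t0) / (a + 1) := div_pos (by linarith) (by linarith)
            calc (0:ℝ) < (a - y t0) / (a + 1) := h1
            _ ≤ g (y t0) := by rw [hg_def]; exact le_trans (le_max_left _ _) (le_max_left _ _)
          · have h1 : 0 < (y t0 - b) / (2 - b) := div_pos (by linarith) (by linarith)
            calc (0:ℝ) < (y t0 - b) / (2 - b) := h1
            _ ≤ g (y t0) := by
                rw [hg_def]; exact le_trans (le_max_right _ _) (le_max_left _ _)
        have hsum : 0 < ∑ t, g (y t) :=
          lt_of_lt_of_le hgpos (Finset.single_le_sum (fun t _ => hg0 _) (Finset.mem_univ t0))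
        have hθpos : 0 < θ y := by rw [hθ_def]; exact lt_min hsum one_pos
        have h1θ : 0 < 1 - θ y := by linarith
        have hz01 : ∀ t, 0 < Z y t ∧ Z y t < 1 := hZ01 y
        have hsign : ∀ (i : Fin (n+1)) (hi : i ≠ 0),
            (y (i.pred hi) < 1/2 → 0 < μ i (Z y) K) ∧
            (1/2 ≤ y (i.pred hi) → μ i (Z y) K ≤ 0) := by
          intro i hi
          have h := hzero i hi
          simp only [hμt_def, dif_neg hi] at h
          constructor
          · intro hlt
            nlinarith [mul_pos hθpos (show (0:ℝ) < 1 - 2 * y (i.pred hi) by linarith)]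
          · intro hge
            nlinarith [mul_nonneg (hθnn y) (show (0:ℝ) ≤ 2 * y (i.pred hi) - 1 by linarith)]
        have hcpos := cinv_pos hz01
        have hcsum := cinv_sum (Z y)
        have hYm := Ymap_cinv hz01
        obtain ⟨j, hjδ, hjor⟩ := cinv_delta hz01
        have hμjle : μ j (Z y) K ≤ 0 := by
          rcases hjor with rfl | ⟨hj0, hjz⟩
          · rw [hμ0]
          · have hyj : 1/2 ≤ y (j.pred hj0) := by
              have h2 : (1/2:ℝ) ≤ max (y (j.pred hj0)) a := by
                have := hjz
                rw [hZ_def] at this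
                exact le_trans this (min_le_left _ _)
              rcases le_max_iff.mp h2 with h | h
              · exact h
              · linarith
            exact (hsign j hj0).2 hyj
        rcases ht0' with hlt | hgt
        · have hi : t0.succ ≠ (0 : Fin (n+1)) := Fin.succ_ne_zero t0
          have hzt0 : Z y t0 = a := by
            simp only [hZ_def]
            rw [max_eq_right hlt.le, min_eq_left hab]
          have hci : cinv n (Z y) t0.succ ≤ ε := by
            have h := cinv_le_pred hz01 t0.succ hi
            rw [Fin.pred_succ, hzt0] at h
            linarith
          have hlt2 := hE (cinv n (Z y)) hcpos hcsum K hK t0.succ j hci hjδ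
          rw [hYm] at hlt2
          have hpos : 0 < μ t0.succ (Z y) K :=
            (hsign t0.succ hi).1 (by rw [Fin.pred_succ]; linarith)
          linarith
        · have hzt0 : Z y t0 = b := by
            simp only [hZ_def]
            rw [max_eq_left (by linarith : a ≤ y t0), min_eq_right (by linarith : b ≤ y t0)]
          have hc0 : cinv n (Z y) 0 ≤ ε := by
            have h := cinv_zero_le hz01 t0
            rw [hzt0, hb_def] at h
            linarith
          have hj0ne : j ≠ 0 := by
            intro hj0
            rw [hj0] at hjδ
            have h := cinv_zero_le hz01 t0
            rw [hzt0, hb_def] at h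
            linarith
          have hlt2 := hE (cinv n (Z y)) hcpos hcsum K hK 0 j hc0 hjδ
          rw [hYm, hμ0] at hlt2
          linarith
      · -- θ y = 1
        have hy12 : ∀ t : Fin n, y t = 1/2 := by
          intro t
          have h := hzero t.succ (Fin.succ_ne_zero t)
          simp only [hμt_def, dif_neg (Fin.succ_ne_zero t), Fin.pred_succ, hθ1'] at h
          linarith
        have := hy12 t0
        rcases ht0' with h | h <;> linarith
    have hθ0' : θ y = 0 := by
      have hsz : ∑ t, g (y t) = 0 := Finset.sum_eq_zero fun t _ => hgin _ (key t).1 (key t).2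
      rw [hθ_def]
      simp [hsz]
    have hZy : Z y = y := by
      funext t
      simp only [hZ_def]
      rw [max_eq_left (key t).1, min_eq_left (key t).2]
    constructor
    · intro t
      exact ⟨lt_of_lt_of_le ha0 (key t).1, lt_of_le_of_lt (key t).2 hb1⟩
    · intro i
      by_cases hi : i = 0
      · rw [hi, hμ0]
      · have h := hzero i hi
        simp only [hμt_def, dif_neg hi, hθ0', hZy] at h
        linarith
  · -- (ii) faces
    intro i hi y _ K _
    constructor
    · intro hym1
      have hθ' : θ y = 1 := hθeq1 y (i.pred hi) (by rw [hym1]; exact hgm1)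
      simp only [hμt_def, dif_neg hi, hθ', hym1]
      norm_num
    · intro hym2
      have hθ' : θ y = 1 := hθeq1 y (i.pred hi) (by rw [hym2]; exact hg2)
      simp only [hμt_def, dif_neg hi, hθ', hym2]
      norm_num
  · -- (iii) affine map
    refine ⟨{ toFun := fun y => fun t => (2 * y t - 1) / 3,
              linear := (2/3 : ℝ) • (LinearMap.id : (Fin n → ℝ) →ₗ[ℝ] (Fin n → ℝ)),
              map_vadd' := by
                intro p v
                funext t
                simp [Pi.add_apply, LinearMap.smul_apply, Pi.smul_apply, smul_eq_mul]
                ring }, ?_⟩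
    rintro y _ ⟨t, ht⟩ K _ i hi
    have hθ' : θ y = 1 := by
      rcases ht with h | h
      · exact hθeq1 y t (by rw [h]; exact hgm1)
      · exact hθeq1 y t (by rw [h]; exact hg2)
    simp only [hμt_def, dif_neg hi, hθ', AffineMap.coe_mk]
    ring
end

section
/- Let $h:(a,b)\to(0,\infty)$ be continuous and $\tau_0\in(a,b)$. Suppose $h^k:(a,b)\to(0,\infty)$ is a sequence of continuous functions converging to $h$ uniformly on compact subsets of $(a,b)$, that $\int_{\tau_0}^b h=\infty$, and let $l>0$. Define $t^k$ (when it exists) by $\int_{\tau_0}^{t^k}h^k=l$ and $t^\infty$ by $\int_{\tau_0}^{t^\infty}h=l$. Then $t^\infty\in(\tau_0,b)$ exists and is unique, $t^k$ exists for all large $k$, and $t^k\to t^\infty$. -/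
/-!
The primitives `F k t = ∫ τ in τ0..t, hk k τ` and `F t = ∫ τ in τ0..t, h τ` are continuous and
strictly increasing on `(τ0, b)`, and `F k → F` pointwise there by uniform convergence on
`[τ0, t]`. Since `h` has infinite integral over `(τ0, b)`, `F` exceeds `l` before `b`, so `F`
hits `l` at a unique `tinf`. For `s₁ < tinf < s₂`, eventually `F k s₁ < l < F k s₂`, so the
unique solution of `F k t = l` lies in `(s₁, s₂)`.
-/

open MeasureTheory Set Filter Topology

section Primitive

variable {a b c : ℝ} {g : ℝ → ℝ}

theorem hasDerivAt_intervalIntegral_of_continuousOn_Ioo (hg : ContinuousOn g (Ioo a b))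
    (hc : c ∈ Ioo a b) {t : ℝ} (ht : t ∈ Ioo a b) :
    HasDerivAt (fun u => ∫ x in c..u, g x) (g t) t :=
  intervalIntegral.integral_hasDerivAt_right
    ((hg.mono (ordConnected_Ioo.uIcc_subset hc ht)).intervalIntegrable)
    (hg.stronglyMeasurableAtFilter isOpen_Ioo t ht) (hg.continuousAt (Ioo_mem_nhds ht.1 ht.2))

theorem continuousOn_intervalIntegral_of_continuousOn_Ioo (hg : ContinuousOn g (Ioo a b))
    (hc : c ∈ Ioo a b) : ContinuousOn (fun u => ∫ x in c..u, g x) (Ioo a b) := fun _ ht =>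
  (hasDerivAt_intervalIntegral_of_continuousOn_Ioo hg hc ht).continuousAt.continuousWithinAt

theorem strictMonoOn_intervalIntegral_of_pos (hg : ContinuousOn g (Ioo a b))
    (hpos : ∀ x ∈ Ioo a b, 0 < g x) (hc : c ∈ Ioo a b) :
    StrictMonoOn (fun u => ∫ x in c..u, g x) (Ioo a b) :=
  strictMonoOn_of_deriv_pos (convex_Ioo a b)
    (continuousOn_intervalIntegral_of_continuousOn_Ioo hg hc) fun t ht => by
      rw [interior_Ioo] at ht
      rw [(hasDerivAt_intervalIntegral_of_continuousOn_Ioo hg hc ht).deriv]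
      exact hpos t ht

theorem exists_lt_intervalIntegral_of_lintegral_eq_top (hg : ContinuousOn g (Ico c b))
    (hnonneg : ∀ x ∈ Ioo c b, 0 ≤ g x) (hdiv : ∫⁻ x in Ioo c b, ENNReal.ofReal (g x) = ⊤)
    (y : ℝ) : ∃ t ∈ Ioo c b, y < ∫ x in c..t, g x := by
  have hcb : c < b := by
    by_contra! hbc
    simp [Ioo_eq_empty hbc.not_gt] at hdiv
  have hcover : AECover (volume.restrict (Ioo c b)) (𝓝[<] b) (fun t => Ioc c t) :=
    aecover_Ioo_of_Ioc tendsto_const_nhds nhdsWithin_le_nhds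
  have hmeas : AEMeasurable (fun x => ENNReal.ofReal (g x)) (volume.restrict (Ioo c b)) :=
    ENNReal.measurable_ofReal.comp_aemeasurable
      ((hg.mono Ioo_subset_Ico_self).aemeasurable measurableSet_Ioo)
  have hlim := hcover.lintegral_tendsto_of_countably_generated hmeas
  rw [hdiv] at hlim
  obtain ⟨t, hyt, ht⟩ := ((tendsto_order.1 hlim).1 (ENNReal.ofReal y) ENNReal.ofReal_lt_top
    |>.and (Ioo_mem_nhdsLT_of_mem ⟨hcb, le_rfl⟩)).exists
  have hIoc : Ioc c t ⊆ Ioo c b := Ioc_subset_Ioo_right ht.2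
  rw [Measure.restrict_restrict measurableSet_Ioc, inter_eq_left.2 hIoc,
    ← ofReal_integral_eq_lintegral_ofReal, ← intervalIntegral.integral_of_le ht.1.le,
    ENNReal.ofReal_lt_ofReal_iff'] at hyt
  · exact ⟨t, ht, hyt.1⟩
  · exact ((hg.mono (Icc_subset_Ico_right ht.2)).integrableOn_compact isCompact_Icc).mono_set
      Ioc_subset_Icc_self
  · exact (ae_restrict_iff' measurableSet_Ioc).2 (ae_of_all _ fun x hx => hnonneg x (hIoc hx))

end Primitive

section HittingTime

variable {ι : Type*} {l : Filter ι} {F : ι → ℝ → ℝ}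

theorem eventually_exists_mem_Ioo_eq_of_tendsto {s₁ s₂ y₁ y₂ y : ℝ} (hs : s₁ ≤ s₂)
    (hF : ∀ i, ContinuousOn (F i) (Icc s₁ s₂)) (h₁ : Tendsto (fun i => F i s₁) l (𝓝 y₁))
    (h₂ : Tendsto (fun i => F i s₂) l (𝓝 y₂)) (hy : y ∈ Ioo y₁ y₂) :
    ∀ᶠ i in l, ∃ t ∈ Ioo s₁ s₂, F i t = y := by
  filter_upwards [h₁.eventually (gt_mem_nhds hy.1), h₂.eventually (lt_mem_nhds hy.2)]
    with i hi₁ hi₂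
  exact intermediate_value_Ioo hs (hF i) ⟨hi₁, hi₂⟩

theorem exists_tendsto_of_strictMonoOn_of_tendsto {f : ℝ → ℝ} {c d t₀ : ℝ}
    (hF : ∀ i, ContinuousOn (F i) (Ioo c d)) (hFmono : ∀ i, StrictMonoOn (F i) (Ioo c d))
    (hf : StrictMonoOn f (Ioo c d)) (hlim : ∀ t ∈ Ioo c d, Tendsto (fun i => F i t) l (𝓝 (f t)))
    (ht₀ : t₀ ∈ Ioo c d) :
    ∃ T : ι → ℝ, (∀ᶠ i in l, T i ∈ Ioo c d ∧ F i (T i) = f t₀) ∧ Tendsto T l (𝓝 t₀) := by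
  -- `T i` solves `F i t = f t₀` whenever some `t` does.
  choose! T hT using fun i (h : ∃ t ∈ Ioo c d, F i t = f t₀) => h
  have hloc : ∀ s₁ ∈ Ioo c t₀, ∀ s₂ ∈ Ioo t₀ d,
      ∀ᶠ i in l, T i ∈ Ioo s₁ s₂ ∧ F i (T i) = f t₀ := by
    intro s₁ hs₁ s₂ hs₂
    have hsub : Ioo s₁ s₂ ⊆ Ioo c d := Ioo_subset_Ioo hs₁.1.le hs₂.2.le
    have hs₁' : s₁ ∈ Ioo c d := ⟨hs₁.1, hs₁.2.trans ht₀.2⟩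
    have hs₂' : s₂ ∈ Ioo c d := ⟨ht₀.1.trans hs₂.1, hs₂.2⟩
    filter_upwards [eventually_exists_mem_Ioo_eq_of_tendsto (hs₁.2.trans hs₂.1).le
      (fun i => (hF i).mono (Icc_subset_Ioo hs₁.1 hs₂.2)) (hlim s₁ hs₁') (hlim s₂ hs₂')
      ⟨hf hs₁' ht₀ hs₁.2, hf ht₀ hs₂' hs₂.1⟩] with i ⟨t, ht, hFt⟩
    obtain ⟨hTi, hFTi⟩ := hT i ⟨t, hsub ht, hFt⟩
    rw [(hFmono i).injOn hTi (hsub ht) (hFTi.trans hFt.symm)]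
    exact ⟨ht, hFt⟩
  obtain ⟨s₁, hs₁⟩ := exists_between ht₀.1
  obtain ⟨s₂, hs₂⟩ := exists_between ht₀.2
  refine ⟨T, (hloc s₁ hs₁ s₂ hs₂).mono fun i hi =>
    ⟨Ioo_subset_Ioo hs₁.1.le hs₂.2.le hi.1, hi.2⟩, tendsto_order.2 ⟨fun u hu => ?_, fun u hu => ?_⟩⟩
  · obtain ⟨s, hs⟩ := exists_between (max_lt hu ht₀.1)
    exact (hloc s ⟨(le_max_right _ _).trans_lt hs.1, hs.2⟩ s₂ hs₂).mono fun i hi =>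
      ((le_max_left _ _).trans_lt hs.1).trans hi.1.1
  · obtain ⟨s, hs⟩ := exists_between (lt_min hu ht₀.2)
    exact (hloc s₁ hs₁ s ⟨hs.1, hs.2.trans_le (min_le_right _ _)⟩).mono fun i hi =>
      hi.1.2.trans (hs.2.trans_le (min_le_left _ _))

end HittingTime

theorem stmt_17 (a b : ℝ) (τ0 : ℝ) (hτ0 : τ0 ∈ Ioo a b)
    (h : ℝ → ℝ) (hk : ℕ → ℝ → ℝ)
    (hc : ContinuousOn h (Ioo a b)) (hp : ∀ τ ∈ Ioo a b, 0 < h τ)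
    (hkc : ∀ k, ContinuousOn (hk k) (Ioo a b))
    (hkp : ∀ k, ∀ τ ∈ Ioo a b, 0 < hk k τ)
    (hunif : ∀ K ⊆ Ioo a b, IsCompact K → TendstoUniformlyOn hk h atTop K)
    (hdiv : ∫⁻ τ in Ioo τ0 b, ENNReal.ofReal (h τ) = ⊤)
    (l : ℝ) (hl : 0 < l) :
    ∃ tinf ∈ Ioo τ0 b,
      (∫ τ in τ0..tinf, h τ) = l ∧
      (∀ t', t' ∈ Ioo τ0 b → (∫ τ in τ0..t', h τ) = l → t' = tinf) ∧
      ∃ tk : ℕ → ℝ,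
        (∀ᶠ k in atTop, tk k ∈ Ioo τ0 b ∧ (∫ τ in τ0..tk k, hk k τ) = l) ∧
        Tendsto tk atTop (nhds tinf) := by
  have hsub : Ioo τ0 b ⊆ Ioo a b := Ioo_subset_Ioo_left hτ0.1.le
  have hmono : StrictMonoOn (fun t => ∫ τ in τ0..t, h τ) (Ioo τ0 b) :=
    (strictMonoOn_intervalIntegral_of_pos hc hp hτ0).mono hsub
  obtain ⟨t₁, ht₁, hlt⟩ := exists_lt_intervalIntegral_of_lintegral_eq_top
    (hc.mono (Ico_subset_Ioo_left hτ0.1)) (fun x hx => (hp x (hsub hx)).le) hdiv l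
  obtain ⟨tinf, htinf, hinf⟩ := intermediate_value_Ioo ht₁.1.le
    ((continuousOn_intervalIntegral_of_continuousOn_Ioo hc hτ0).mono (Icc_subset_Ioo hτ0.1 ht₁.2))
    (show l ∈ Ioo (∫ τ in τ0..τ0, h τ) (∫ τ in τ0..t₁, h τ) by simp [hl, hlt])
  replace htinf : tinf ∈ Ioo τ0 b := ⟨htinf.1, htinf.2.trans ht₁.2⟩
  have hlim : ∀ t ∈ Ioo τ0 b,
      Tendsto (fun k => ∫ τ in τ0..t, hk k τ) atTop (𝓝 (∫ τ in τ0..t, h τ)) := fun t ht =>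
    have hK : uIcc τ0 t ⊆ Ioo a b := ordConnected_Ioo.uIcc_subset hτ0 (hsub ht)
    (hunif _ hK isCompact_uIcc).tendsto_intervalIntegral_of_continuousOn
      (.of_forall fun k => (hkc k).mono hK)
  refine ⟨tinf, htinf, hinf, fun t' ht' hl' => hmono.injOn ht' htinf (hl'.trans hinf.symm), ?_⟩
  rw [← hinf]
  exact exists_tendsto_of_strictMonoOn_of_tendsto
    (fun k => (continuousOn_intervalIntegral_of_continuousOn_Ioo (hkc k) hτ0).mono hsub)
    (fun k => (strictMonoOn_intervalIntegral_of_pos (hkc k) (hkp k) hτ0).mono hsub)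
    hmono hlim htinf
end
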